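/- Let G be a finite group, α an automorphism of G, and p a prime dividing |G|. Then the least common multiple over all x ∈ G of the orders of the permutations A_{x,α} divides (∏_{q} q^{ν_q(|G|)}) · p^{2·ν_p(exp(G))} · exp(Out(G)), where the product ∏_{q} runs over all primes q dividing |G| with q ≠ p. -/

import Mathlib

/-- The bijective affine map `A_{x,α} : g ↦ x * α g` as a permutation of `G`. -/
def Aff {G : Type*} [Group G] (x : G) (α : G ≃* G) : Equiv.Perm G :=
  α.toEquiv.trans (Equiv.mulLeft x)

/-- The group of inner automorphisms of `G`, i.e. the range of `MulAut.conj : G →* MulAut G`. -/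
def Inn (G : Type*) [Group G] : Subgroup (MulAut G) := (MulAut.conj : G →* MulAut G).range

instance Inn.normal (G : Type*) [Group G] : (Inn G).Normal := by
  constructor
  rintro _ ⟨g, rfl⟩ σ
  exact ⟨σ g, by ext h; simp [MulAut.conj]⟩

/-- The outer automorphism group `Out(G) := Aut(G)/Inn(G)`. -/
def Out (G : Type*) [Group G] := MulAut G ⧸ Inn G

instance (G : Type*) [Group G] : Group (Out G) := QuotientGroup.Quotient.group (Inn G)

/-
Composing affine maps gives `A_{y,β} ∘ A_{x,α} = A_{y β(x), βα}`, so the `e`-th power of `A_{x,α}`,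
for `e = exp(Out G)`, is an affine map `A_{y,conj c}`, i.e. the two-sided multiplication
`g ↦ (y c) g c⁻¹`. Its `m`-th power is `g ↦ (y c)^m g c^{-m}`, which is the identity for
`m = exp(G)`. Hence every `A_{x,α}` has order dividing `exp(Out G) · exp(G)`, and `exp(G)` divides
`|G|_{p'} · p^{ν_p(exp G)}` because it divides `|G|`.
-/

section Affine

variable {G : Type*} [Group G]

lemma Aff_apply (x : G) (α : G ≃* G) (g : G) :
    Aff x α g = x * α g := rfl

lemma Aff_mul (x y : G) (α β : G ≃* G) :
    Aff y β * Aff x α = Aff (y * β x) (β * α) := by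
  ext g
  simp [Aff_apply, mul_assoc]

lemma exists_Aff_pow (x : G) (α : G ≃* G) (n : ℕ) :
    ∃ y : G, Aff x α ^ n = Aff y (α ^ n) := by
  induction n with
  | zero => exact ⟨1, by ext g; simp [Aff_apply]⟩
  | succ n ih =>
    obtain ⟨y, hy⟩ := ih
    exact ⟨y * (α ^ n) x, by rw [pow_succ, hy, Aff_mul, ← pow_succ]⟩

lemma Aff_conj_pow_apply (y c : G) (m : ℕ) (g : G) :
    (Aff y (MulAut.conj c) ^ m) g = (y * c) ^ m * g * c⁻¹ ^ m := by
  induction m with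
  | zero => simp
  | succ m ih =>
    rw [pow_succ', Equiv.Perm.mul_apply, ih, Aff_apply]
    simp only [MulAut.conj_apply, pow_succ', inv_pow]
    group

lemma Aff_conj_pow_exponent (y c : G) :
    Aff y (MulAut.conj c) ^ Monoid.exponent G = 1 := by
  ext g
  simp [Aff_conj_pow_apply, Monoid.pow_exponent_eq_one]

lemma exists_pow_exponent_Out_eq_Aff_conj (x : G) (α : G ≃* G) :
    ∃ y c : G, Aff x α ^ Monoid.exponent (Out G) = Aff y (MulAut.conj c) := by
  have hα : (QuotientGroup.mk α : Out G) ^ Monoid.exponent (Out G) = 1 :=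
    Monoid.pow_exponent_eq_one _
  rw [← QuotientGroup.mk_pow, QuotientGroup.eq_one_iff] at hα
  obtain ⟨c, hc⟩ := hα
  obtain ⟨y, hy⟩ := exists_Aff_pow x α (Monoid.exponent (Out G))
  exact ⟨y, c, by rw [hy, ← hc]⟩

lemma orderOf_Aff_dvd (x : G) (α : G ≃* G) :
    orderOf (Aff x α) ∣ Monoid.exponent (Out G) * Monoid.exponent G := by
  obtain ⟨y, c, h⟩ := exists_pow_exponent_Out_eq_Aff_conj x α
  exact orderOf_dvd_of_pow_eq_one (by rw [pow_mul, h, Aff_conj_pow_exponent])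

end Affine

lemma Nat.prod_primeFactors_erase_pow_factorization {n : ℕ} (hn : n ≠ 0) (p : ℕ) :
    ∏ q ∈ n.primeFactors.erase p, q ^ n.factorization q = ordCompl[p] n := by
  conv_rhs =>
    rw [← Nat.prod_factorization_pow_eq_self (Nat.ordCompl_pos p hn).ne',
      Nat.factorization_ordCompl]
  rw [Finsupp.prod, Finsupp.support_erase, Nat.support_factorization]
  exact Finset.prod_congr rfl fun q hq => by rw [Finsupp.erase_ne (Finset.ne_of_mem_erase hq)]

lemma Nat.dvd_ordCompl_mul_ordProj_of_dvd {m n : ℕ} (h : m ∣ n) (p : ℕ) :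
    m ∣ ordCompl[p] n * ordProj[p] m := by
  rw [mul_comm]
  conv_lhs => rw [← Nat.ordProj_mul_ordCompl_eq_self m p]
  exact mul_dvd_mul_left _ (Nat.ordCompl_dvd_ordCompl_of_dvd h p)

theorem stmt_6_general {G : Type*} [Group G] [Fintype G] (α : G ≃* G) {p : ℕ} :
    (Finset.univ.lcm fun x : G => orderOf (Aff x α)) ∣
      (∏ q ∈ (Fintype.card G).primeFactors.erase p, q ^ (Fintype.card G).factorization q) *
        p ^ (2 * (Monoid.exponent G).factorization p) * Monoid.exponent (Out G) := by
  have hexp : Monoid.exponent G ∣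
      (∏ q ∈ (Fintype.card G).primeFactors.erase p, q ^ (Fintype.card G).factorization q) *
        p ^ (2 * (Monoid.exponent G).factorization p) := by
    rw [Nat.prod_primeFactors_erase_pow_factorization Fintype.card_ne_zero]
    exact (Nat.dvd_ordCompl_mul_ordProj_of_dvd Group.exponent_dvd_card p).trans
      (mul_dvd_mul_left _ (pow_dvd_pow p (by omega)))
  refine Finset.lcm_dvd fun x _ => (orderOf_Aff_dvd x α).trans ?_
  rw [mul_comm]
  exact mul_dvd_mul_right hexp _

theorem stmt_6 {G : Type*} [Group G] [Fintype G] (α : G ≃* G) {p : ℕ} (hp : p.Prime)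
    (hpG : p ∣ Fintype.card G) :
    (Finset.univ.lcm fun x : G => orderOf (Aff x α)) ∣
      (∏ q ∈ (Fintype.card G).primeFactors.erase p, q ^ (Fintype.card G).factorization q) *
        p ^ (2 * (Monoid.exponent G).factorization p) * Monoid.exponent (Out G) :=
  stmt_6_general α
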